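/- arXiv:1805.05171 — 5 statements merged into one kernel-verified Lean document; each statement's English description precedes it below -/
import Mathlib

section
/- Two distinct k-element subsets n = (n_1 < ... < n_k) and m = (m_1 < ... < m_k) of ℕ satisfy d(n,m) = 1 (where d is the segment-counting metric) if and only if they are interlaced, i.e., n_1 ≤ m_1 ≤ n_2 ≤ m_2 ≤ ... ≤ n_k ≤ m_k or m_1 ≤ n_1 ≤ m_2 ≤ n_2 ≤ ... ≤ m_k ≤ n_k. -/
open Filter Finset

/-- The segment-counting distance: `d(n,m) = sup { | |n ∩ S| - |m ∩ S| | : S a segment of ℕ }`. -/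
noncomputable def dseg (n m : Finset ℕ) : ℕ :=
  ⨆ a : ℕ, ⨆ b : ℕ,
    (((n ∩ Finset.Icc a b).card : ℤ) - ((m ∩ Finset.Icc a b).card : ℤ)).natAbs

/-- The `i`-th element (in increasing order) of a `k`-element subset of `ℕ`. -/
def elt {k : ℕ} (n : Finset ℕ) (hn : n.card = k) (i : Fin k) : ℕ :=
  n.orderIsoOfFin hn i

/-- `n₁ ≤ m₁ ≤ n₂ ≤ m₂ ≤ … ≤ n_k ≤ m_k`, where elements are listed in increasing order. -/
def InterlacedLE {k : ℕ} (n m : Finset ℕ) (hn : n.card = k) (hm : m.card = k) : Prop :=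
  (∀ i : Fin k, elt n hn i ≤ elt m hm i) ∧
  ∀ i j : Fin k, (i : ℕ) + 1 = (j : ℕ) → elt m hm i ≤ elt n hn j

lemma elt_le_iff {k : ℕ} (n : Finset ℕ) (hn : n.card = k) (j : Fin k) (t : ℕ) :
    elt n hn j ≤ t ↔ (j : ℕ) < (n.filter (· ≤ t)).card := by
  have helt : elt n hn j = n.orderEmbOfFin hn j := Finset.coe_orderIsoOfFin_apply n hn j
  set e := n.orderEmbOfFin hn with he
  have hcard : (n.filter (· ≤ t)).card
      = (univ.filter (fun i : Fin k => e i ≤ t)).card := by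
    rw [← Finset.card_image_of_injective _ e.injective]
    congr 1
    ext x
    simp only [Finset.mem_filter, Finset.mem_image, Finset.mem_univ, true_and]
    constructor
    · rintro ⟨hxn, hxt⟩
      have : x ∈ Set.range e := by
        rw [he, Finset.range_orderEmbOfFin]; exact hxn
      obtain ⟨i, hi⟩ := this
      exact ⟨i, by rw [hi]; exact hxt, hi⟩
    · rintro ⟨i, hit, hix⟩
      exact ⟨hix ▸ Finset.orderEmbOfFin_mem n hn i, hix ▸ hit⟩
  rw [helt, hcard]
  constructor
  · intro h
    have hsub : Finset.Iic j ⊆ univ.filter (fun i : Fin k => e i ≤ t) := by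
      intro i hi
      simp only [Finset.mem_Iic] at hi
      simp only [Finset.mem_filter, Finset.mem_univ, true_and]
      exact le_trans (e.monotone hi) h
    have := Finset.card_le_card hsub
    rw [Fin.card_Iic] at this
    omega
  · intro h
    by_contra h'
    push_neg at h'
    have hsub : univ.filter (fun i : Fin k => e i ≤ t) ⊆ Finset.Iio j := by
      intro i hi
      simp only [Finset.mem_filter, Finset.mem_univ, true_and] at hi
      simp only [Finset.mem_Iio]
      exact e.strictMono.lt_iff_lt.mp (lt_of_le_of_lt hi h')
    have := Finset.card_le_card hsub
    rw [Fin.card_Iio] at this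
    omega

lemma interlaced_iff_counts {k : ℕ} (n m : Finset ℕ) (hn : n.card = k) (hm : m.card = k) :
    InterlacedLE n m hn hm ↔
      ∀ t : ℕ, (m.filter (· ≤ t)).card ≤ (n.filter (· ≤ t)).card ∧
        (n.filter (· ≤ t)).card ≤ (m.filter (· ≤ t)).card + 1 := by
  constructor
  · rintro ⟨h1, h2⟩ t
    constructor
    · rcases Nat.eq_zero_or_pos ((m.filter (· ≤ t)).card) with hc | hc
      · omega
      · have hck : (m.filter (· ≤ t)).card ≤ k := hm ▸ Finset.card_filter_le m _
        set c := (m.filter (· ≤ t)).card with hcdef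
        have hlt : c - 1 < k := by omega
        have hmt : elt m hm ⟨c - 1, hlt⟩ ≤ t :=
          (elt_le_iff m hm ⟨c - 1, hlt⟩ t).mpr (by simp; omega)
        have := (elt_le_iff n hn ⟨c - 1, hlt⟩ t).mp (le_trans (h1 ⟨c - 1, hlt⟩) hmt)
        simp at this
        omega
    · rcases le_or_gt ((n.filter (· ≤ t)).card) 1 with hc | hc
      · omega
      · have hck : (n.filter (· ≤ t)).card ≤ k := hn ▸ Finset.card_filter_le n _
        set c := (n.filter (· ≤ t)).card with hcdef
        have h1lt : c - 1 < k := by omega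
        have h2lt : c - 2 < k := by omega
        have hjt : elt n hn ⟨c - 1, h1lt⟩ ≤ t :=
          (elt_le_iff n hn ⟨c - 1, h1lt⟩ t).mpr (by simp; omega)
        have hij := h2 ⟨c - 2, h2lt⟩ ⟨c - 1, h1lt⟩ (by simp; omega)
        have := (elt_le_iff m hm ⟨c - 2, h2lt⟩ t).mp (le_trans hij hjt)
        simp at this
        omega
  · intro h
    constructor
    · intro i
      have h1 := (elt_le_iff m hm i (elt m hm i)).mp le_rfl
      have h2 := (h (elt m hm i)).1
      exact (elt_le_iff n hn i _).mpr (lt_of_lt_of_le h1 h2)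
    · intro i j hij
      have hj := (elt_le_iff n hn j (elt n hn j)).mp le_rfl
      have h2 := (h (elt n hn j)).2
      refine (elt_le_iff m hm i _).mpr ?_
      omega

lemma card_inter_Icc_aux (s : Finset ℕ) {a b : ℕ} (hab : a ≤ b) :
    (s ∩ Finset.Icc a b).card + (s.filter (· < a)).card = (s.filter (· ≤ b)).card := by
  have h1 : s ∩ Finset.Icc a b = (s.filter (· ≤ b)).filter (fun x => a ≤ x) := by
    ext x
    simp only [Finset.mem_inter, Finset.mem_Icc, Finset.mem_filter]
    tauto
  have h2 : s.filter (· < a) = (s.filter (· ≤ b)).filter (fun x => ¬ a ≤ x) := by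
    ext x
    simp only [Finset.mem_filter]
    constructor
    · rintro ⟨hs, hlt⟩
      exact ⟨⟨hs, by omega⟩, by omega⟩
    · rintro ⟨⟨hs, _⟩, hge⟩
      exact ⟨hs, by omega⟩
  rw [h1, h2, Finset.card_filter_add_card_filter_not]

lemma filter_lt_zero_eq (s : Finset ℕ) : s.filter (· < 0) = ∅ := by
  ext x; simp

lemma filter_lt_succ_eq (s : Finset ℕ) (a : ℕ) :
    s.filter (· < a + 1) = s.filter (· ≤ a) := by
  ext x; simp [Nat.lt_succ_iff]

lemma key_counts (n m : Finset ℕ) :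
    (∀ a b : ℕ,
      (((n ∩ Finset.Icc a b).card : ℤ) - ((m ∩ Finset.Icc a b).card : ℤ)).natAbs ≤ 1)
    ↔ ((∀ t : ℕ, (m.filter (· ≤ t)).card ≤ (n.filter (· ≤ t)).card ∧
          (n.filter (· ≤ t)).card ≤ (m.filter (· ≤ t)).card + 1) ∨
       (∀ t : ℕ, (n.filter (· ≤ t)).card ≤ (m.filter (· ≤ t)).card ∧
          (m.filter (· ≤ t)).card ≤ (n.filter (· ≤ t)).card + 1)) := by
  have key2 : ∀ a b : ℕ, a ≤ b →
      ((n ∩ Finset.Icc a b).card : ℤ) - ((m ∩ Finset.Icc a b).card : ℤ)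
      = (((n.filter (· ≤ b)).card : ℤ) - ((n.filter (· < a)).card : ℤ))
        - (((m.filter (· ≤ b)).card : ℤ) - ((m.filter (· < a)).card : ℤ)) := by
    intro a b hab
    have h1 := card_inter_Icc_aux n hab
    have h2 := card_inter_Icc_aux m hab
    omega
  constructor
  · intro hC
    have hg : ∀ b : ℕ, (m.filter (· ≤ b)).card ≤ (n.filter (· ≤ b)).card + 1 ∧
        (n.filter (· ≤ b)).card ≤ (m.filter (· ≤ b)).card + 1 := by
      intro b
      have h := hC 0 b
      rw [key2 0 b b.zero_le, filter_lt_zero_eq n, filter_lt_zero_eq m] at h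
      simp only [Finset.card_empty] at h
      omega
    have hnb : ∀ t₁ t₂ : ℕ,
        (n.filter (· ≤ t₁)).card = (m.filter (· ≤ t₁)).card + 1 →
        (m.filter (· ≤ t₂)).card = (n.filter (· ≤ t₂)).card + 1 → False := by
      intro t₁ t₂ h1 h2
      rcases lt_trichotomy t₁ t₂ with h | h | h
      · have hh := hC (t₁ + 1) t₂
        rw [key2 (t₁ + 1) t₂ (by omega), filter_lt_succ_eq n, filter_lt_succ_eq m] at hh
        omega
      · subst h; omega
      · have hh := hC (t₂ + 1) t₁
        rw [key2 (t₂ + 1) t₁ (by omega), filter_lt_succ_eq n, filter_lt_succ_eq m] at hh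
        omega
    by_cases hA : ∃ t, (n.filter (· ≤ t)).card = (m.filter (· ≤ t)).card + 1
    · left
      intro t
      obtain ⟨t₁, ht₁⟩ := hA
      have hgt := hg t
      constructor
      · by_contra hcon
        push_neg at hcon
        have : (m.filter (· ≤ t)).card = (n.filter (· ≤ t)).card + 1 := by omega
        exact hnb t₁ t ht₁ this
      · omega
    · right
      intro t
      push_neg at hA
      have h1 := hA t
      have h2 := hg t
      omega
  · intro hD a b
    rcases le_or_gt a b with hab | hab
    · rw [key2 a b hab]
      rcases hD with hD | hD <;>
      · have hb := hD b
        cases a with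
        | zero =>
          rw [filter_lt_zero_eq n, filter_lt_zero_eq m]
          simp only [Finset.card_empty]
          omega
        | succ a' =>
          rw [filter_lt_succ_eq n, filter_lt_succ_eq m]
          have ha := hD a'
          omega
    · have hI : Finset.Icc a b = ∅ := Finset.Icc_eq_empty (by omega)
      rw [hI]
      simp

/-- Two distinct `k`-element subsets of `ℕ` are at segment-counting distance `1`
if and only if they are interlaced. -/
theorem dseg_eq_one_iff_interlaced {k : ℕ} (n m : Finset ℕ)
    (hn : n.card = k) (hm : m.card = k) (hne : n ≠ m) :
    dseg n m = 1 ↔ (InterlacedLE n m hn hm ∨ InterlacedLE m n hm hn) := by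
  have hbF : ∀ a b : ℕ,
      (((n ∩ Finset.Icc a b).card : ℤ) - ((m ∩ Finset.Icc a b).card : ℤ)).natAbs ≤ k := by
    intro a b
    have h1 : (n ∩ Finset.Icc a b).card ≤ k :=
      hn ▸ Finset.card_le_card Finset.inter_subset_left
    have h2 : (m ∩ Finset.Icc a b).card ≤ k :=
      hm ▸ Finset.card_le_card Finset.inter_subset_left
    omega
  have hbdd1 : ∀ a : ℕ, BddAbove (Set.range fun b : ℕ =>
      (((n ∩ Finset.Icc a b).card : ℤ) - ((m ∩ Finset.Icc a b).card : ℤ)).natAbs) :=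
    fun a => ⟨k, by rintro x ⟨b, rfl⟩; exact hbF a b⟩
  have hbdd2 : BddAbove (Set.range fun a : ℕ => ⨆ b : ℕ,
      (((n ∩ Finset.Icc a b).card : ℤ) - ((m ∩ Finset.Icc a b).card : ℤ)).natAbs) :=
    ⟨k, by rintro x ⟨a, rfl⟩; exact ciSup_le' (hbF a)⟩
  have hsup : dseg n m = 1 ↔ ∀ a b : ℕ,
      (((n ∩ Finset.Icc a b).card : ℤ) - ((m ∩ Finset.Icc a b).card : ℤ)).natAbs ≤ 1 := by
    constructor
    · intro h a b
      have h1 : (((n ∩ Finset.Icc a b).card : ℤ) - ((m ∩ Finset.Icc a b).card : ℤ)).natAbs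
          ≤ dseg n m := by
        unfold dseg
        exact le_trans (le_ciSup (hbdd1 a) b) (le_ciSup hbdd2 a)
      omega
    · intro h
      have hle : dseg n m ≤ 1 := ciSup_le' (fun a => ciSup_le' (fun b => h a b))
      have hx : ∃ x, (x ∈ n ∧ x ∉ m) ∨ (x ∈ m ∧ x ∉ n) := by
        by_contra hc
        push_neg at hc
        apply hne
        ext x
        have := hc x
        tauto
      obtain ⟨x, hx⟩ := hx
      have hF : (((n ∩ Finset.Icc x x).card : ℤ) - ((m ∩ Finset.Icc x x).card : ℤ)).natAbs
          = 1 := by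
        rw [Finset.Icc_self]
        rcases hx with ⟨h1, h2⟩ | ⟨h1, h2⟩
        · have e1 : n ∩ {x} = {x} := by
            ext y
            simp only [Finset.mem_inter, Finset.mem_singleton]
            constructor
            · tauto
            · rintro rfl; exact ⟨h1, rfl⟩
          have e2 : m ∩ {x} = ∅ := by
            ext y
            simp only [Finset.mem_inter, Finset.mem_singleton, Finset.notMem_empty,
              iff_false, not_and]
            rintro hy rfl; exact h2 hy
          rw [e1, e2]
          simp
        · have e1 : m ∩ {x} = {x} := by
            ext y
            simp only [Finset.mem_inter, Finset.mem_singleton]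
            constructor
            · tauto
            · rintro rfl; exact ⟨h1, rfl⟩
          have e2 : n ∩ {x} = ∅ := by
            ext y
            simp only [Finset.mem_inter, Finset.mem_singleton, Finset.notMem_empty,
              iff_false, not_and]
            rintro hy rfl; exact h2 hy
          rw [e1, e2]
          simp
      have hge : 1 ≤ dseg n m := by
        have h1 : (((n ∩ Finset.Icc x x).card : ℤ) - ((m ∩ Finset.Icc x x).card : ℤ)).natAbs
            ≤ dseg n m := by
          unfold dseg
          exact le_trans (le_ciSup (hbdd1 x) x) (le_ciSup hbdd2 x)
        omega
      omega
  rw [hsup, key_counts n m]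
  exact or_congr (interlaced_iff_counts n m hn hm).symm (interlaced_iff_counts m n hm hn).symm
end

section
/- If n and m are k-element subsets of ℕ with d(n,m) ≥ 2 (where d is the segment-counting metric), then there exists a k-element subset l of ℕ, distinct from both n and m, such that d(n,l) = 1 and d(l,m) = d(n,m) - 1. Consequently d coincides with the shortest-path metric of the interlacing graph on [ℕ]^k. -/
open Filter Finset

/-- The vertex set `[ℕ]^k`. -/
def Vk (k : ℕ) := {s : Finset ℕ // s.card = k}

/-- The interlacing graph on `[ℕ]^k`: distinct `n, m` are adjacent iff interlaced. -/
def interGraph (k : ℕ) : SimpleGraph (Vk k) where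
  Adj x y := x ≠ y ∧ (InterlacedLE x.1 y.1 x.2 y.2 ∨ InterlacedLE y.1 x.1 y.2 x.2)
  symm := ⟨fun x y h => ⟨h.1.symm, h.2.symm⟩⟩
  loopless := ⟨fun x h => h.1 rfl⟩

/-!
Write `disc n m x = |n ∩ [0, x)| - |m ∩ [0, x)|`. A segment `[a, b]` contributes
`disc n m (b + 1) - disc n m a`, so `dseg n m` is the oscillation `M - μ` of `disc n m`, and when
`|n| = |m|` the extremes satisfy `μ ≤ 0 ≤ M` because `disc n m 0 = 0`. Interlacing `n ≤ m` means
exactly `0 ≤ disc n m ≤ 1`. If `M - μ ≥ 2`, clamp `disc n m` to a window `[lo, hi] ∋ 0` inside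
`[μ, M]` of length `M - μ - 1`. Clamping preserves the `0/1` increments of counting functions, so
the clamped function is `disc l m` for some `l`; then `dseg l m = M - μ - 1`, while
`disc n l = disc n m - disc l m` oscillates by exactly `1`. Iterating gives a walk of length
`dseg`, and the triangle inequality shows that no walk is shorter.
-/

def disc (n m : Finset ℕ) (x : ℕ) : ℤ := Nat.count (· ∈ n) x - Nat.count (· ∈ m) x

lemma exists_count_eq_card (s : Finset ℕ) : ∃ N, ∀ x ≥ N, Nat.count (· ∈ s) x = #s := by
  obtain ⟨N, hN⟩ := exists_nat_subset_range s
  refine ⟨N, fun x hx => ?_⟩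
  rw [Nat.count_eq_card_filter_range, filter_mem_eq_inter, inter_eq_right.2]
  exact hN.trans (range_subset_range.2 hx)

lemma count_le_card (s : Finset ℕ) (x : ℕ) : Nat.count (· ∈ s) x ≤ #s := by
  rw [Nat.count_eq_card_filter_range, filter_mem_eq_inter]
  exact card_le_card inter_subset_right

lemma card_inter_Ico_add_count (s : Finset ℕ) {a c : ℕ} (h : a ≤ c) :
    #(s ∩ Ico a c) + Nat.count (· ∈ s) a = Nat.count (· ∈ s) c := by
  rw [Nat.count_eq_card_filter_range, Nat.count_eq_card_filter_range,
    ← card_union_of_disjoint (disjoint_left.2 fun y hy hy' => by simp at hy hy'; omega)]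
  congr 1
  ext y
  simp only [mem_union, mem_inter, mem_Ico, mem_filter, mem_range]
  grind

section disc

variable (n m : Finset ℕ)

@[simp] lemma disc_zero : disc n m 0 = 0 := by simp [disc]

lemma disc_self (x : ℕ) : disc n n x = 0 := sub_self _

lemma disc_swap (x : ℕ) : disc m n x = -disc n m x := (neg_sub _ _).symm

lemma disc_add_disc (l : Finset ℕ) (x : ℕ) : disc n l x + disc l m x = disc n m x := by
  unfold disc; ring

lemma disc_succ (x : ℕ) :
    disc n m (x + 1) = disc n m x + ((if x ∈ n then 1 else 0) - (if x ∈ m then 1 else 0)) := by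
  simp only [disc, Nat.count_succ]; push_cast; ring

lemma card_inter_Icc_sub_card_inter_Icc {a b : ℕ} (h : a ≤ b + 1) :
    (#(n ∩ Icc a b) : ℤ) - #(m ∩ Icc a b) = disc n m (b + 1) - disc n m a := by
  have hn := card_inter_Ico_add_count n h
  have hm := card_inter_Ico_add_count m h
  rw [Ico_add_one_right_eq_Icc] at hn hm
  unfold disc; omega

lemma exists_disc_eq_card_sub_card : ∃ N, ∀ x ≥ N, disc n m x = #n - #m := by
  obtain ⟨N, hN⟩ := exists_count_eq_card n
  obtain ⟨N', hN'⟩ := exists_count_eq_card m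
  exact ⟨max N N', fun x hx => by simp only [disc, hN x (le_of_max_le_left hx),
    hN' x (le_of_max_le_right hx)]⟩

lemma exists_isGreatest_range_disc : ∃ M, IsGreatest (Set.range (disc n m)) M := by
  obtain ⟨N, hN⟩ := exists_disc_eq_card_sub_card n m
  obtain ⟨x₀, -, hx₀⟩ := exists_max_image (range (N + 1)) (disc n m) nonempty_range_add_one
  refine ⟨disc n m x₀, ⟨x₀, rfl⟩, Set.forall_mem_range.2 fun x => ?_⟩
  rcases lt_or_ge x (N + 1) with hx | hx
  · exact hx₀ x (mem_range.2 hx)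
  · rw [hN x (by omega), ← hN N le_rfl]
    exact hx₀ N (mem_range.2 (by omega))

lemma exists_isLeast_range_disc : ∃ μ, IsLeast (Set.range (disc n m)) μ := by
  obtain ⟨M, hM⟩ := exists_isGreatest_range_disc m n
  obtain ⟨⟨x₀, hx₀⟩, hM⟩ := hM
  refine ⟨-M, ⟨x₀, by rw [← hx₀, disc_swap n m, neg_neg]⟩, Set.forall_mem_range.2 fun x => ?_⟩
  have := hM ⟨x, rfl⟩
  rw [disc_swap n m] at this
  linarith

end disc

section dseg

variable (n m : Finset ℕ)

lemma natAbs_card_inter_Icc_sub_le (a b : ℕ) :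
    ((#(n ∩ Icc a b) : ℤ) - #(m ∩ Icc a b)).natAbs ≤ #n + #m := by
  have := card_le_card (inter_subset_left (s₁ := n) (s₂ := Icc a b))
  have := card_le_card (inter_subset_left (s₁ := m) (s₂ := Icc a b))
  omega

lemma natAbs_card_inter_Icc_sub_le_dseg (a b : ℕ) :
    ((#(n ∩ Icc a b) : ℤ) - #(m ∩ Icc a b)).natAbs ≤ dseg n m := by
  have hbdd : ∀ a, BddAbove (Set.range fun b => ((#(n ∩ Icc a b) : ℤ) - #(m ∩ Icc a b)).natAbs) :=
    fun a => ⟨#n + #m, Set.forall_mem_range.2 (natAbs_card_inter_Icc_sub_le n m a)⟩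
  unfold dseg
  refine (le_ciSup (hbdd a) b).trans ?_
  exact le_ciSup
    ⟨#n + #m, Set.forall_mem_range.2 fun a => ciSup_le (natAbs_card_inter_Icc_sub_le n m a)⟩ a

lemma abs_disc_sub_disc_le_dseg (x y : ℕ) : |disc n m y - disc n m x| ≤ dseg n m := by
  wlog hxy : x ≤ y generalizing x y
  · rw [abs_sub_comm]; exact this y x (le_of_not_ge hxy)
  obtain _ | b := y
  · simp [Nat.le_zero.1 hxy]
  · have := natAbs_card_inter_Icc_sub_le_dseg n m x b
    rwa [card_inter_Icc_sub_card_inter_Icc n m hxy, ← Int.ofNat_le, Int.natCast_natAbs] at this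

lemma disc_sub_disc_le_dseg (x y : ℕ) : disc n m y - disc n m x ≤ dseg n m :=
  (le_abs_self _).trans (abs_disc_sub_disc_le_dseg n m x y)

lemma dseg_le_iff {D : ℕ} : dseg n m ≤ D ↔ ∀ x y, disc n m y - disc n m x ≤ D := by
  refine ⟨fun h x y => (disc_sub_disc_le_dseg n m x y).trans (by exact_mod_cast h),
    fun h => ciSup_le fun a => ciSup_le fun b => ?_⟩
  rcases le_or_gt a (b + 1) with hab | hab
  · have := h a (b + 1)
    have := h (b + 1) a
    rw [card_inter_Icc_sub_card_inter_Icc n m hab]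
    omega
  · simp [Icc_eq_empty (show ¬a ≤ b by omega)]

lemma dseg_eq_of_isLeast_of_isGreatest {μ M : ℤ} (hμ : IsLeast (Set.range (disc n m)) μ)
    (hM : IsGreatest (Set.range (disc n m)) M) : (dseg n m : ℤ) = M - μ := by
  obtain ⟨⟨x₁, rfl⟩, hM⟩ := hM
  obtain ⟨⟨x₂, rfl⟩, hμ⟩ := hμ
  refine le_antisymm ?_ (disc_sub_disc_le_dseg n m x₂ x₁)
  have := hμ ⟨x₁, rfl⟩
  have : dseg n m ≤ (disc n m x₁ - disc n m x₂).toNat :=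
    (dseg_le_iff n m).2 fun x y => by
      have := hM ⟨y, rfl⟩
      have := hμ ⟨x, rfl⟩
      omega
  omega

lemma dseg_triangle (l : Finset ℕ) : dseg n m ≤ dseg n l + dseg l m :=
  (dseg_le_iff n m).2 fun x y => by
    rw [← disc_add_disc n m l y, ← disc_add_disc n m l x]
    push_cast
    linarith [disc_sub_disc_le_dseg n l x y, disc_sub_disc_le_dseg l m x y]

lemma eq_of_forall_disc_eq_zero (h : ∀ x, disc n m x = 0) : n = m := by
  ext y
  have := disc_succ n m y
  rw [h, h] at this
  by_cases hn : y ∈ n <;> by_cases hm : y ∈ m <;> simp [hn, hm] at this ⊢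

lemma dseg_eq_zero_iff : dseg n m = 0 ↔ n = m := by
  refine ⟨fun h => eq_of_forall_disc_eq_zero n m fun x => ?_, ?_⟩
  · have := (dseg_le_iff n m).1 h.le 0 x
    have := (dseg_le_iff n m).1 h.le x 0
    simp only [disc_zero, Nat.cast_zero] at *
    omega
  · rintro rfl
    exact Nat.le_zero.1 ((dseg_le_iff n n).2 fun x y => by simp [disc_self])

@[simp] lemma dseg_self : dseg n n = 0 := (dseg_eq_zero_iff n n).2 rfl

end dseg

lemma exists_finset_count_eq (h : ℕ → ℤ) (h0 : h 0 = 0)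
    (hstep : ∀ x, h (x + 1) = h x ∨ h (x + 1) = h x + 1) {N : ℕ} (hN : ∀ x ≥ N, h (x + 1) = h x) :
    ∃ l : Finset ℕ, ∀ x, (Nat.count (· ∈ l) x : ℤ) = h x := by
  refine ⟨{x ∈ range N | h (x + 1) = h x + 1}, fun x => ?_⟩
  induction x with
  | zero => simp [h0]
  | succ x ih =>
    rw [Nat.count_succ, Nat.cast_add, ih]
    by_cases hx : x < N
    · rcases hstep x with e | e <;> simp [e, hx]
    · simp [hN x (not_lt.1 hx), hx]

lemma exists_disc_eq_clamp (n m : Finset ℕ) (hc : #n = #m) {lo hi : ℤ} (hlo : lo ≤ 0)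
    (hhi : 0 ≤ hi) : ∃ l : Finset ℕ, #l = #m ∧ ∀ x, disc l m x = max lo (min hi (disc n m x)) := by
  obtain ⟨N, hN⟩ := exists_disc_eq_card_sub_card n m
  obtain ⟨Nm, hNm⟩ := exists_count_eq_card m
  obtain ⟨l, hl⟩ := exists_finset_count_eq
    (fun x => Nat.count (· ∈ m) x + max lo (min hi (disc n m x))) (by simp only [Nat.count_zero, disc_zero]; omega)
    (fun x => by
      rw [Nat.count_succ, disc_succ]
      split_ifs <;> push_cast <;> omega)
    (N := max N Nm) (fun x hx => by
      simp [hNm x (le_of_max_le_right hx), hNm (x + 1) (by omega), hN x (le_of_max_le_left hx),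
        hN (x + 1) (by omega)])
  refine ⟨l, ?_, fun x => by rw [disc, hl]; ring⟩
  obtain ⟨Nl, hNl⟩ := exists_count_eq_card l
  have := hl (max (max N Nm) Nl)
  rw [hNl _ (le_max_right _ _), hNm _ (by omega), hN _ (by omega), hc] at this
  omega

section clamp

variable {α : Type*} {F : α → ℤ} {μ M lo hi : ℤ}

lemma isLeast_range_clamp (hμ : IsLeast (Set.range F) μ) (hμlo : μ ≤ lo) :
    IsLeast (Set.range fun x => max lo (min hi (F x))) lo := by
  obtain ⟨⟨x, hx⟩, -⟩ := hμ
  exact ⟨⟨x, by beta_reduce; omega⟩, Set.forall_mem_range.2 fun _ => le_max_left _ _⟩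

lemma isGreatest_range_clamp (hM : IsGreatest (Set.range F) M) (hhiM : hi ≤ M) (hlohi : lo ≤ hi) :
    IsGreatest (Set.range fun x => max lo (min hi (F x))) hi := by
  obtain ⟨⟨x, hx⟩, -⟩ := hM
  exact ⟨⟨x, by beta_reduce; omega⟩, Set.forall_mem_range.2 fun _ => max_le hlohi (min_le_left _ _)⟩

lemma isLeast_range_sub_clamp (hμ : IsLeast (Set.range F) μ) (hμlo : μ ≤ lo) :
    IsLeast (Set.range fun x => F x - max lo (min hi (F x))) (μ - lo) := by
  obtain ⟨⟨x, hx⟩, hμ⟩ := hμ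
  refine ⟨⟨x, by beta_reduce; omega⟩, Set.forall_mem_range.2 fun y => ?_⟩
  have := hμ ⟨y, rfl⟩
  omega

lemma isGreatest_range_sub_clamp (hM : IsGreatest (Set.range F) M) (hhiM : hi ≤ M)
    (hlohi : lo ≤ hi) : IsGreatest (Set.range fun x => F x - max lo (min hi (F x))) (M - hi) := by
  obtain ⟨⟨x, hx⟩, hM⟩ := hM
  refine ⟨⟨x, by beta_reduce; omega⟩, Set.forall_mem_range.2 fun y => ?_⟩
  have := hM ⟨y, rfl⟩
  omega

end clamp

theorem exists_dseg_eq_one_of_two_le_dseg (n m : Finset ℕ) (hc : #n = #m) (h2 : 2 ≤ dseg n m) :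
    ∃ l : Finset ℕ, #l = #m ∧ dseg n l = 1 ∧ dseg l m = dseg n m - 1 := by
  obtain ⟨μ, hμ⟩ := exists_isLeast_range_disc n m
  obtain ⟨M, hM⟩ := exists_isGreatest_range_disc n m
  have hμ0 : μ ≤ 0 := hμ.2 ⟨0, disc_zero n m⟩
  have hM0 : 0 ≤ M := hM.2 ⟨0, disc_zero n m⟩
  have hD := dseg_eq_of_isLeast_of_isGreatest n m hμ hM
  set lo := min 0 (μ + 1)
  set hi := lo + (M - μ - 1)
  obtain ⟨l, hl, hlm⟩ := exists_disc_eq_clamp n m hc (lo := lo) (hi := hi) (by omega) (by omega)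
  have hnl : disc n l = fun x => disc n m x - max lo (min hi (disc n m x)) := by
    funext x
    rw [← hlm, ← disc_add_disc n m l x]
    ring
  have hnl' := dseg_eq_of_isLeast_of_isGreatest n l (hnl ▸ isLeast_range_sub_clamp hμ (by omega))
    (hnl ▸ isGreatest_range_sub_clamp hM (by omega) (by omega))
  have hlm' := dseg_eq_of_isLeast_of_isGreatest l m (funext hlm ▸ isLeast_range_clamp hμ (by omega))
    (funext hlm ▸ isGreatest_range_clamp hM (by omega) (by omega))
  exact ⟨l, hl, by omega, by omega⟩

section elt

variable {k : ℕ} (s : Finset ℕ) (hs : #s = k)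

lemma elt_mem (i : Fin k) : elt s hs i ∈ s := orderEmbOfFin_mem s hs i

lemma count_elt (i : Fin k) : Nat.count (· ∈ s) (elt s hs i) = i := by
  have : {y ∈ range (elt s hs i) | y ∈ s} = (Iio i).map (s.orderEmbOfFin hs).toEmbedding := by
    ext y
    simp only [mem_filter, mem_range, Finset.mem_map, mem_Iio]
    constructor
    · rintro ⟨hlt, hy⟩
      obtain ⟨j, rfl⟩ : y ∈ Set.range (s.orderEmbOfFin hs) := by rwa [range_orderEmbOfFin]
      exact ⟨j, (s.orderEmbOfFin hs).lt_iff_lt.1 hlt, rfl⟩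
    · rintro ⟨j, hj, rfl⟩
      exact ⟨(s.orderEmbOfFin hs).lt_iff_lt.2 hj, orderEmbOfFin_mem s hs j⟩
  rw [Nat.count_eq_card_filter_range, this, card_map, Fin.card_Iio]

lemma elt_lt_iff_lt_count (i : Fin k) (x : ℕ) :
    elt s hs i < x ↔ (i : ℕ) < Nat.count (· ∈ s) x := by
  rw [← count_elt s hs i]
  exact ⟨Nat.count_strict_mono (elt_mem s hs i), Nat.lt_of_count_lt_count⟩

lemma forall_elt_le_elt_iff {t : Finset ℕ} (ht : #t = k) (d : ℕ) :
    (∀ i j : Fin k, (i : ℕ) + d = j → elt s hs i ≤ elt t ht j) ↔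
      ∀ x, Nat.count (· ∈ t) x ≤ Nat.count (· ∈ s) x + d := by
  constructor
  · intro h x
    by_contra! hx
    have hj : Nat.count (· ∈ s) x + d < k := ht ▸ hx.trans_le (count_le_card t x)
    have hi : Nat.count (· ∈ s) x < k := by omega
    have hts := h ⟨_, hi⟩ ⟨_, hj⟩ rfl
    have htx := (elt_lt_iff_lt_count t ht ⟨_, hj⟩ x).2 hx
    have hsx := (elt_lt_iff_lt_count s hs ⟨_, hi⟩ x).not.2 (lt_irrefl _)
    omega
  · intro h i j hij
    by_contra! hlt
    have := (elt_lt_iff_lt_count t ht j _).1 hlt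
    have := h (elt s hs i)
    rw [count_elt] at this
    omega

end elt

lemma interlacedLE_iff {k : ℕ} {n m : Finset ℕ} (hn : #n = k) (hm : #m = k) :
    InterlacedLE n m hn hm ↔ ∀ x, 0 ≤ disc n m x ∧ disc n m x ≤ 1 := by
  have h0 := forall_elt_le_elt_iff n hn hm 0
  simp only [add_zero, Fin.val_inj, forall_eq'] at h0
  rw [InterlacedLE, h0, forall_elt_le_elt_iff m hm hn 1, ← forall_and]
  refine forall_congr' fun x => ?_
  unfold disc
  omega

lemma dseg_le_one_iff (n m : Finset ℕ) :
    dseg n m ≤ 1 ↔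
      (∀ x, 0 ≤ disc n m x ∧ disc n m x ≤ 1) ∨ ∀ x, 0 ≤ disc m n x ∧ disc m n x ≤ 1 := by
  simp only [dseg_le_iff, disc_swap n m, Nat.cast_one]
  refine ⟨fun h => ?_, by rintro (h | h) x y <;> have := h x <;> have := h y <;> omega⟩
  by_cases hpos : ∃ x₀, 0 < disc n m x₀
  · obtain ⟨x₀, hx₀⟩ := hpos
    refine .inl fun x => ?_
    have := h 0 x
    have := h x x₀
    simp only [disc_zero] at *
    omega
  · simp only [not_exists, not_lt] at hpos
    refine .inr fun x => ?_
    have := h x 0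
    have := hpos x
    simp only [disc_zero] at *
    omega

lemma interGraph_adj_iff {k : ℕ} (x y : Vk k) : (interGraph k).Adj x y ↔ dseg x.1 y.1 = 1 := by
  have : dseg x.1 y.1 = 1 ↔ dseg x.1 y.1 ≠ 0 ∧ dseg x.1 y.1 ≤ 1 := by omega
  rw [this, ne_eq, dseg_eq_zero_iff, dseg_le_one_iff, ← interlacedLE_iff x.2 y.2,
    ← interlacedLE_iff y.2 x.2]
  exact and_congr_left' (not_congr ⟨congrArg Subtype.val, Subtype.ext⟩)

lemma dseg_le_length {k : ℕ} {x y : Vk k} (p : (interGraph k).Walk x y) :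
    dseg x.1 y.1 ≤ p.length := by
  induction p with
  | nil => simp
  | @cons a b c h p ih =>
    have := (interGraph_adj_iff a b).1 h
    have := dseg_triangle a.1 c.1 b.1
    rw [SimpleGraph.Walk.length_cons]
    omega

lemma exists_walk_length_eq_dseg {k : ℕ} (x y : Vk k) :
    ∃ p : (interGraph k).Walk x y, p.length = dseg x.1 y.1 := by
  induction hD : dseg x.1 y.1 generalizing x with
  | zero =>
    obtain rfl := Subtype.ext ((dseg_eq_zero_iff _ _).1 hD)
    exact ⟨.nil, rfl⟩
  | succ D ih =>
    rcases Nat.eq_zero_or_pos D with rfl | hD0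
    · exact ⟨.cons ((interGraph_adj_iff x y).2 hD) .nil, rfl⟩
    obtain ⟨l, hl, hxl, hly⟩ :=
      exists_dseg_eq_one_of_two_le_dseg x.1 y.1 (x.2.trans y.2.symm) (by omega)
    let z : Vk k := ⟨l, hl.trans y.2⟩
    obtain ⟨p, hp⟩ := ih z (by simp [z, hly, hD])
    exact ⟨.cons ((interGraph_adj_iff x z).2 hxl) p, by rw [SimpleGraph.Walk.length_cons, hp]⟩

/-- If `d(n,m) ≥ 2` then there is a `k`-element subset `l`, distinct from both, with
`d(n,l) = 1` and `d(l,m) = d(n,m) - 1`; consequently `d` coincides with the shortest-path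
metric of the interlacing graph on `[ℕ]^k`. -/
theorem dseg_geodesic (k : ℕ) :
    (∀ n m : Finset ℕ, n.card = k → m.card = k → 2 ≤ dseg n m →
      ∃ l : Finset ℕ, l.card = k ∧ l ≠ n ∧ l ≠ m ∧
        dseg n l = 1 ∧ dseg l m = dseg n m - 1) ∧
    (∀ x y : Vk k, (interGraph k).dist x y = dseg x.1 y.1) := by
  refine ⟨fun n m hn hm h2 => ?_, fun x y => ?_⟩
  · obtain ⟨l, hl, hnl, hlm⟩ := exists_dseg_eq_one_of_two_le_dseg n m (hn.trans hm.symm) h2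
    refine ⟨l, hl.trans hm, ?_, ?_, hnl, hlm⟩
    · rintro rfl
      simp at hnl
    · rintro rfl
      omega
  · obtain ⟨p, hp⟩ := exists_walk_length_eq_dseg x y
    obtain ⟨q, hq⟩ := SimpleGraph.Reachable.exists_walk_length_eq_dist ⟨p⟩
    exact le_antisymm (hp ▸ SimpleGraph.dist_le p) (hq ▸ dseg_le_length q)
end

section
/- The diameter of the interlaced graph [M]^k equals k, for any infinite subset M of ℕ. -/
open Filter Finset

lemma dseg_term_le (n m : Finset ℕ) (k : ℕ) (hn : n.card = k) (hm : m.card = k)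
    (a b : ℕ) :
    (((n ∩ Finset.Icc a b).card : ℤ) - ((m ∩ Finset.Icc a b).card : ℤ)).natAbs ≤ k := by
  have h1 : (n ∩ Finset.Icc a b).card ≤ k := hn ▸ Finset.card_le_card Finset.inter_subset_left
  have h2 : (m ∩ Finset.Icc a b).card ≤ k := hm ▸ Finset.card_le_card Finset.inter_subset_left
  omega

/-- The diameter of the interlaced graph `[M]^k` equals `k`, for any infinite `M ⊆ ℕ`. -/
theorem diam_interlaced_graph (k : ℕ) (M : Set ℕ) (hM : M.Infinite) :
    (∀ n m : Finset ℕ, ↑n ⊆ M → ↑m ⊆ M → n.card = k → m.card = k → dseg n m ≤ k) ∧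
    (∃ n m : Finset ℕ, ↑n ⊆ M ∧ ↑m ⊆ M ∧ n.card = k ∧ m.card = k ∧ dseg n m = k) := by
  constructor
  · intro n m _ _ hcn hcm
    exact ciSup_le fun a => ciSup_le fun b => dseg_term_le n m k hcn hcm a b
  · obtain ⟨n, hnM, hnc⟩ := hM.exists_subset_card_eq k
    set N := n.sup id with hN
    have hM' : (M \ Set.Icc 0 N).Infinite := hM.diff (Set.finite_Icc 0 N)
    obtain ⟨m, hmM', hmc⟩ := hM'.exists_subset_card_eq k
    refine ⟨n, m, hnM, fun x hx => (hmM' hx).1, hnc, hmc, le_antisymm ?_ ?_⟩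
    · exact ciSup_le fun a => ciSup_le fun b => dseg_term_le n m k hnc hmc a b
    · have h1 : n ∩ Finset.Icc 0 N = n :=
        Finset.inter_eq_left.2 fun x hx =>
          Finset.mem_Icc.2 ⟨Nat.zero_le x, Finset.le_sup (f := id) hx⟩
      have h2 : m ∩ Finset.Icc 0 N = ∅ := by
        ext x
        simp only [Finset.mem_inter, Finset.mem_Icc, Finset.notMem_empty, iff_false, not_and]
        intro hx h
        exact fun hxN => (hmM' hx).2 ⟨Nat.zero_le x, by omega⟩
      have hterm : (((n ∩ Finset.Icc 0 N).card : ℤ) - ((m ∩ Finset.Icc 0 N).card : ℤ)).natAbs = k := by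
        rw [h1, h2, hnc]; simp
      calc k = _ := hterm.symm
        _ ≤ ⨆ b, (((n ∩ Finset.Icc 0 b).card : ℤ) - ((m ∩ Finset.Icc 0 b).card : ℤ)).natAbs :=
          le_ciSup ⟨k, by rintro x ⟨b, rfl⟩; exact dseg_term_le n m k hnc hmc 0 b⟩ N
        _ ≤ dseg n m :=
          le_ciSup (f := fun a => ⨆ b, (((n ∩ Finset.Icc a b).card : ℤ) - ((m ∩ Finset.Icc a b).card : ℤ)).natAbs)
            ⟨k, by rintro x ⟨a, rfl⟩; exact ciSup_le fun b => dseg_term_le n m k hnc hmc a b⟩ 0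
end

section
/- Let X be a Banach space with δ̄*_X(t) ≥ c·t^q for all t ∈ [0,1] (some c > 0, q ≥ 1), and let δ(t) = ∫_0^t (δ̄*_X(s)/s) ds. Then δ is a 1-Lipschitz Orlicz function satisfying δ̄*_X(t/2) ≤ δ(t) ≤ δ̄*_X(t) for all t ≥ 0. -/
open Filter NormedSpace

/-- `E` is a weak*-closed subspace of the dual `X*`. -/
def WeakStarClosed (X : Type*) [NormedAddCommGroup X] [NormedSpace ℝ X]
    (E : Submodule ℝ (StrongDual ℝ X)) : Prop :=
  IsClosed (StrongDual.toWeakDual '' (E : Set (StrongDual ℝ X)))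

/-- The weak* modulus of asymptotic uniform convexity:
`δ̄*_X(t) = inf_{x* ∈ S_{X*}} sup_E inf_{y* ∈ S_E} (‖x* + t·y*‖ - 1)`, where `E` runs over
weak*-closed finite-codimensional subspaces of `X*`. -/
noncomputable def aucStarModulus (X : Type*) [NormedAddCommGroup X] [NormedSpace ℝ X]
    (t : ℝ) : ℝ :=
  sInf {a : ℝ | ∃ f : StrongDual ℝ X, ‖f‖ = 1 ∧
    a = sSup {b : ℝ | ∃ E : Submodule ℝ (StrongDual ℝ X), WeakStarClosed X E ∧
      FiniteDimensional ℝ (StrongDual ℝ X ⧸ E) ∧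
      b = sInf {c : ℝ | ∃ g ∈ E, ‖g‖ = 1 ∧ c = ‖f + t • g‖ - 1}}}


/-! Scaling `x* + t y*` towards `x*` shows, through the inf-sup-inf, that
`δ̄*(r t) ≤ r δ̄*(t)` for `r ∈ [0, 1]`: the slope `φ(t) = δ̄*(t)/t` is nondecreasing, and
`0 ≤ φ ≤ 1` since `0 ≤ δ̄*(t) ≤ t` (the lower bound by testing `x*` on the kernel of a point of
the unit ball). So `δ = ∫₀ φ` is convex, nondecreasing and `1`-Lipschitz, and monotonicity of `φ`
gives `δ(a) + (b - a) φ(a) ≤ δ(b) ≤ δ(a) + (b - a) φ(b)`. Taking `(a, b) = (t/2, t)` and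
`(0, t)` gives the two comparisons with `δ̄*`, and `a = 1`, where `φ(1) ≥ c > 0`, gives
`δ → ∞`. -/

open Set

theorem setOf_exists_and_eq_eq_empty {ι α : Type*} {p : ι → Prop} (hp : ¬∃ i, p i) (F : ι → α) :
    {c | ∃ i, p i ∧ c = F i} = ∅ :=
  eq_empty_of_forall_notMem fun _ ⟨i, hi, _⟩ => hp ⟨i, hi⟩

theorem Real.sInf_le_mul_sInf_of_le {ι : Type*} {p : ι → Prop} {F G : ι → ℝ} {r : ℝ}
    (hr : 0 ≤ r) (hF : BddBelow {c | ∃ i, p i ∧ c = F i}) (h : ∀ i, p i → F i ≤ r * G i) :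
    sInf {c | ∃ i, p i ∧ c = F i} ≤ r * sInf {c | ∃ i, p i ∧ c = G i} := by
  by_cases hp : ∃ i, p i
  · obtain ⟨i₀, hi₀⟩ := hp
    rw [← smul_eq_mul, ← Real.sInf_smul_of_nonneg hr]
    refine le_csInf ⟨_, _, ⟨i₀, hi₀, rfl⟩, rfl⟩ ?_
    rintro _ ⟨_, ⟨i, hi, rfl⟩, rfl⟩
    exact (csInf_le hF ⟨i, hi, rfl⟩).trans (h i hi)
  · rw [setOf_exists_and_eq_eq_empty hp, setOf_exists_and_eq_eq_empty hp, Real.sInf_empty,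
      mul_zero]

theorem Real.sSup_le_mul_sSup_of_le {ι : Type*} {p : ι → Prop} {F G : ι → ℝ} {r : ℝ}
    (hr : 0 ≤ r) (hG : BddAbove {c | ∃ i, p i ∧ c = G i}) (h : ∀ i, p i → F i ≤ r * G i) :
    sSup {c | ∃ i, p i ∧ c = F i} ≤ r * sSup {c | ∃ i, p i ∧ c = G i} := by
  by_cases hp : ∃ i, p i
  · obtain ⟨i₀, hi₀⟩ := hp
    refine csSup_le ⟨_, i₀, hi₀, rfl⟩ ?_
    rintro _ ⟨i, hi, rfl⟩
    exact (h i hi).trans (mul_le_mul_of_nonneg_left (le_csSup hG ⟨i, hi, rfl⟩) hr)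
  · rw [setOf_exists_and_eq_eq_empty hp, setOf_exists_and_eq_eq_empty hp, Real.sSup_empty,
      mul_zero]

theorem norm_add_mul_smul_sub_one_le {E : Type*} [SeminormedAddCommGroup E] [NormedSpace ℝ E]
    {f : E} (hf : ‖f‖ = 1) (g : E) {r : ℝ} (hr₀ : 0 ≤ r) (hr₁ : r ≤ 1) (t : ℝ) :
    ‖f + (r * t) • g‖ - 1 ≤ r * (‖f + t • g‖ - 1) := by
  have hsplit : f + (r * t) • g = (1 - r) • f + r • (f + t • g) := by
    rw [smul_add, smul_smul, ← add_assoc, ← add_smul, sub_add_cancel, one_smul]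
  calc ‖f + (r * t) • g‖ - 1 ≤ ‖(1 - r) • f‖ + ‖r • (f + t • g)‖ - 1 := by
        rw [hsplit]; gcongr; exact norm_add_le _ _
    _ = r * (‖f + t • g‖ - 1) := by
        rw [norm_smul, norm_smul, hf, Real.norm_of_nonneg (sub_nonneg.2 hr₁),
          Real.norm_of_nonneg hr₀]
        ring

section Modulus

variable {X : Type*} [NormedAddCommGroup X] [NormedSpace ℝ X]

/- `aucStarModulusAt f t` is `δ̄*_X(x*, t) = sup_E inf_{y* ∈ S_E} (‖x* + t y*‖ - 1)`. The side
conditions are grouped into one conjunct so that the `sInf`/`sSup` lemmas above apply. -/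
noncomputable def aucStarModulusSubspace (f : StrongDual ℝ X) (t : ℝ)
    (E : Submodule ℝ (StrongDual ℝ X)) : ℝ :=
  sInf {c | ∃ g, (g ∈ E ∧ ‖g‖ = 1) ∧ c = ‖f + t • g‖ - 1}

noncomputable def aucStarModulusAt (f : StrongDual ℝ X) (t : ℝ) : ℝ :=
  sSup {b | ∃ E : Submodule ℝ (StrongDual ℝ X),
    (WeakStarClosed X E ∧ FiniteDimensional ℝ (StrongDual ℝ X ⧸ E)) ∧
      b = aucStarModulusSubspace f t E}

theorem aucStarModulus_eq_sInf (t : ℝ) :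
    aucStarModulus X t = sInf {a | ∃ f : StrongDual ℝ X, ‖f‖ = 1 ∧ a = aucStarModulusAt f t} := by
  simp only [aucStarModulus, aucStarModulusAt, aucStarModulusSubspace, and_assoc]

theorem aucStarModulusSubspace_le {f : StrongDual ℝ X} (hf : ‖f‖ = 1) {t : ℝ} (ht : 0 ≤ t)
    (E : Submodule ℝ (StrongDual ℝ X)) : aucStarModulusSubspace f t E ≤ t := by
  refine Real.sInf_le_sSup _ ⟨-1, ?_⟩ ⟨t, ?_⟩ |>.trans (Real.sSup_le ?_ ht) <;>
    rintro _ ⟨g, ⟨-, hg⟩, rfl⟩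
  · linarith [norm_nonneg (f + t • g)]
  all_goals
    linarith [norm_add_le f (t • g),
      show ‖t • g‖ = t by rw [norm_smul, hg, mul_one, Real.norm_of_nonneg ht]]

theorem aucStarModulusAt_le {f : StrongDual ℝ X} (hf : ‖f‖ = 1) {t : ℝ} (ht : 0 ≤ t) :
    aucStarModulusAt f t ≤ t :=
  Real.sSup_le (by rintro _ ⟨E, -, rfl⟩; exact aucStarModulusSubspace_le hf ht E) ht

theorem aucStarModulusAt_bddAbove {f : StrongDual ℝ X} (hf : ‖f‖ = 1) {t : ℝ} (ht : 0 ≤ t) :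
    BddAbove {b | ∃ E : Submodule ℝ (StrongDual ℝ X),
      (WeakStarClosed X E ∧ FiniteDimensional ℝ (StrongDual ℝ X ⧸ E)) ∧
        b = aucStarModulusSubspace f t E} :=
  ⟨t, by rintro _ ⟨E, -, rfl⟩; exact aucStarModulusSubspace_le hf ht E⟩

theorem weakStarClosed_ker_inclusionInDoubleDual (x : X) :
    WeakStarClosed X (inclusionInDoubleDual ℝ X x).ker := by
  have himage : StrongDual.toWeakDual '' ((inclusionInDoubleDual ℝ X x).ker : Set (StrongDual ℝ X))
      = {h : WeakDual ℝ X | h x = 0} :=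
    (StrongDual.toWeakDual.image_eq_preimage_symm _).trans rfl
  rw [WeakStarClosed, himage]
  exact isClosed_eq (WeakDual.eval_continuous x) continuous_const

theorem le_aucStarModulusSubspace_ker {f : StrongDual ℝ X} (hf : ‖f‖ = 1) (t : ℝ) {x : X}
    (hx : ‖x‖ ≤ 1) : f x - 1 ≤ aucStarModulusSubspace f t (inclusionInDoubleDual ℝ X x).ker := by
  refine Real.le_sInf ?_ (by linarith [(le_abs_self _).trans (f.unit_le_opNorm x hx)])
  rintro _ ⟨g, ⟨hg, -⟩, rfl⟩
  have hgx : g x = 0 := hg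
  have : f x ≤ ‖f + t • g‖ := by
    simpa [hgx] using (le_abs_self _).trans ((f + t • g).unit_le_opNorm x hx)
  linarith

-- The kernel of evaluation at a point of the unit ball is an admissible subspace.
theorem le_aucStarModulusAt {f : StrongDual ℝ X} (hf : ‖f‖ = 1) {t : ℝ} (ht : 0 ≤ t) {x : X}
    (hx : ‖x‖ ≤ 1) : f x - 1 ≤ aucStarModulusAt f t := by
  have hfin : FiniteDimensional ℝ (StrongDual ℝ X ⧸ (inclusionInDoubleDual ℝ X x).ker) :=
    (inclusionInDoubleDual ℝ X x).toLinearMap.quotKerEquivRange.symm.finiteDimensional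
  exact (le_aucStarModulusSubspace_ker hf t hx).trans <| le_csSup (aucStarModulusAt_bddAbove hf ht)
    ⟨_, ⟨weakStarClosed_ker_inclusionInDoubleDual x, hfin⟩, rfl⟩

-- The sup of `f x` over the unit ball is `‖f‖ = 1`.
theorem aucStarModulusAt_nonneg {f : StrongDual ℝ X} (hf : ‖f‖ = 1) {t : ℝ} (ht : 0 ≤ t) :
    0 ≤ aucStarModulusAt f t := by
  have hbound (x : X) (hx : ‖x‖ ≤ 1) : f x ≤ 1 + aucStarModulusAt f t := by
    linarith [le_aucStarModulusAt hf ht hx]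
  have : ‖f‖ ≤ 1 + aucStarModulusAt f t := by
    refine f.opNorm_le_of_unit_norm (by simpa using hbound 0 (by simp)) fun x hx => ?_
    have hneg := hbound (-x) (by rw [norm_neg, hx])
    rw [map_neg] at hneg
    exact abs_le.2 ⟨by linarith, hbound x hx.le⟩
  linarith

theorem aucStarModulus_nonneg {t : ℝ} (ht : 0 ≤ t) : 0 ≤ aucStarModulus X t := by
  rw [aucStarModulus_eq_sInf]
  exact Real.sInf_nonneg (by rintro _ ⟨f, hf, rfl⟩; exact aucStarModulusAt_nonneg hf ht)

theorem aucStarModulus_le_self {t : ℝ} (ht : 0 ≤ t) : aucStarModulus X t ≤ t := by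
  rw [aucStarModulus_eq_sInf]
  refine Real.sInf_le_sSup _ ⟨0, ?_⟩ ⟨t, ?_⟩ |>.trans (Real.sSup_le ?_ ht) <;>
    rintro _ ⟨f, hf, rfl⟩
  exacts [aucStarModulusAt_nonneg hf ht, aucStarModulusAt_le hf ht, aucStarModulusAt_le hf ht]

theorem aucStarModulus_zero : aucStarModulus X 0 = 0 :=
  le_antisymm (aucStarModulus_le_self le_rfl) (aucStarModulus_nonneg le_rfl)

-- Each `t ↦ ‖x* + t • y*‖ - 1` is convex and vanishes at `0`, and this survives the inf-sup-inf.
theorem aucStarModulus_mul_le {r : ℝ} (hr₀ : 0 ≤ r) (hr₁ : r ≤ 1) {t : ℝ} (ht : 0 ≤ t) :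
    aucStarModulus X (r * t) ≤ r * aucStarModulus X t := by
  simp only [aucStarModulus_eq_sInf]
  refine Real.sInf_le_mul_sInf_of_le hr₀
    ⟨0, by rintro _ ⟨f, hf, rfl⟩; exact aucStarModulusAt_nonneg hf (mul_nonneg hr₀ ht)⟩
    fun f hf => Real.sSup_le_mul_sSup_of_le hr₀ (aucStarModulusAt_bddAbove hf ht)
      fun E _ => Real.sInf_le_mul_sInf_of_le hr₀ ⟨-1, ?_⟩
        fun g _ => norm_add_mul_smul_sub_one_le hf g hr₀ hr₁ t
  rintro _ ⟨g, -, rfl⟩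
  linarith [norm_nonneg (f + (r * t) • g)]

theorem monotoneOn_aucStarModulus_div :
    MonotoneOn (fun t => aucStarModulus X t / t) (Ici 0) := by
  intro s (hs : 0 ≤ s) t (ht : 0 ≤ t) hst
  rcases hs.eq_or_lt with rfl | hs
  · simpa using div_nonneg (aucStarModulus_nonneg ht) ht
  have ht' : 0 < t := hs.trans_le hst
  have hscale := aucStarModulus_mul_le (X := X) (div_nonneg hs.le ht) ((div_le_one ht').2 hst) ht
  rw [div_mul_cancel₀ s ht'.ne'] at hscale
  calc aucStarModulus X s / s ≤ s / t * aucStarModulus X t / s := by gcongr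
    _ = aucStarModulus X t / t := by field_simp

theorem aucStarModulus_div_le_one {t : ℝ} (ht : 0 ≤ t) : aucStarModulus X t / t ≤ 1 :=
  div_le_one_of_le₀ (aucStarModulus_le_self ht) ht

end Modulus

namespace MonotoneOn

variable {φ : ℝ → ℝ} (hφ : MonotoneOn φ (Ici 0))
include hφ

theorem intervalIntegrable_of_nonneg {a b : ℝ} (ha : 0 ≤ a) (hb : 0 ≤ b) :
    IntervalIntegrable φ MeasureTheory.volume a b :=
  (hφ.mono fun _ hx => le_trans (le_min ha hb) hx.1).intervalIntegrable

theorem integral_sub_integral_zero {a b : ℝ} (ha : 0 ≤ a) (hb : 0 ≤ b) :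
    (∫ x in 0..b, φ x) - ∫ x in 0..a, φ x = ∫ x in a..b, φ x :=
  intervalIntegral.integral_interval_sub_left (hφ.intervalIntegrable_of_nonneg le_rfl hb)
    (hφ.intervalIntegrable_of_nonneg le_rfl ha)

theorem integral_add_mul_le {a b : ℝ} (ha : 0 ≤ a) (hab : a ≤ b) :
    (∫ x in 0..a, φ x) + (b - a) * φ a ≤ ∫ x in 0..b, φ x := by
  have hb := ha.trans hab
  have := intervalIntegral.integral_mono_on hab intervalIntegrable_const
    (hφ.intervalIntegrable_of_nonneg ha hb) fun x hx => hφ ha (ha.trans hx.1) hx.1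
  rw [intervalIntegral.integral_const, smul_eq_mul, ← hφ.integral_sub_integral_zero ha hb] at this
  linarith

theorem integral_le_add_mul {a b : ℝ} (ha : 0 ≤ a) (hab : a ≤ b) :
    ∫ x in 0..b, φ x ≤ (∫ x in 0..a, φ x) + (b - a) * φ b := by
  have hb := ha.trans hab
  have := intervalIntegral.integral_mono_on hab (hφ.intervalIntegrable_of_nonneg ha hb)
    intervalIntegrable_const fun x hx => hφ (ha.trans hx.1) hb hx.2
  rw [intervalIntegral.integral_const, smul_eq_mul, ← hφ.integral_sub_integral_zero ha hb] at this
  linarith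

theorem convexOn_integral : ConvexOn ℝ (Ici 0) fun t => ∫ x in 0..t, φ x := by
  refine convexOn_of_slope_mono_adjacent (convex_Ici 0) fun {x y z} (hx : 0 ≤ x) _ hxy hyz => ?_
  have hy : 0 ≤ y := hx.trans hxy.le
  calc _ ≤ φ y := by
        rw [div_le_iff₀ (sub_pos.2 hxy)]
        linarith [hφ.integral_le_add_mul hx hxy.le]
    _ ≤ _ := by
        rw [le_div_iff₀ (sub_pos.2 hyz)]
        linarith [hφ.integral_add_mul_le hy hyz.le]

theorem tendsto_integral_atTop {a : ℝ} (ha : 0 ≤ a) (hpos : 0 < φ a) :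
    Tendsto (fun t => ∫ x in 0..t, φ x) atTop atTop := by
  have hlin : Tendsto (fun t => (∫ x in 0..a, φ x) + (t - a) * φ a) atTop atTop :=
    tendsto_atTop_add_const_left _ _ <|
      (tendsto_atTop_add_const_right _ (-a) tendsto_id).atTop_mul_const hpos
  refine tendsto_atTop_mono' _ ?_ hlin
  filter_upwards [eventually_ge_atTop a] with t hat using hφ.integral_add_mul_le ha hat

variable (h0 : 0 ≤ φ 0)
include h0

theorem monotoneOn_integral : MonotoneOn (fun t => ∫ x in 0..t, φ x) (Ici 0) :=
  fun a (ha : 0 ≤ a) _ _ hab => by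
    nlinarith [hφ.integral_add_mul_le ha hab, hφ Set.self_mem_Ici ha ha]

theorem lipschitzOnWith_integral {K : NNReal} (hK : ∀ x, 0 ≤ x → φ x ≤ K) :
    LipschitzOnWith K (fun t => ∫ x in 0..t, φ x) (Ici 0) := by
  have hle {a b : ℝ} (ha : 0 ≤ a) (hab : a ≤ b) :
      dist (∫ x in 0..a, φ x) (∫ x in 0..b, φ x) ≤ K * dist a b := by
    rw [Real.dist_eq, Real.dist_eq, abs_sub_comm, abs_sub_comm a, abs_of_nonneg (sub_nonneg.2 hab),
      abs_of_nonneg (sub_nonneg.2 (hφ.monotoneOn_integral h0 ha (ha.trans hab) hab))]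
    nlinarith [hφ.integral_le_add_mul ha hab, hK b (ha.trans hab)]
  refine LipschitzOnWith.of_dist_le_mul fun a (ha : 0 ≤ a) b (hb : 0 ≤ b) => ?_
  rcases le_total a b with hab | hba
  · exact hle ha hab
  · rw [dist_comm, dist_comm a]; exact hle hb hba

end MonotoneOn

theorem delta_orlicz_general (X : Type*) [NormedAddCommGroup X] [NormedSpace ℝ X]
    (c q : ℝ) (hc : 0 < c)
    (hlow : ∀ t ∈ Set.Icc (0 : ℝ) 1, c * t ^ q ≤ aucStarModulus X t) :
    let δ : ℝ → ℝ := fun t => ∫ s in (0 : ℝ)..t, aucStarModulus X s / s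
    (ContinuousOn δ (Set.Ici 0) ∧ MonotoneOn δ (Set.Ici 0) ∧
      ConvexOn ℝ (Set.Ici 0) δ ∧ δ 0 = 0 ∧ Tendsto δ atTop atTop) ∧
    LipschitzOnWith 1 δ (Set.Ici 0) ∧
    ∀ t : ℝ, 0 ≤ t → aucStarModulus X (t / 2) ≤ δ t ∧ δ t ≤ aucStarModulus X t := by
  intro δ
  set φ : ℝ → ℝ := fun s => aucStarModulus X s / s
  have hφ : MonotoneOn φ (Ici 0) := monotoneOn_aucStarModulus_div
  have hφ₀ : 0 ≤ φ 0 := by simp [φ]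
  have hφ₁ : 0 < φ 1 := by
    have := hlow 1 ⟨zero_le_one, le_rfl⟩
    rw [Real.one_rpow, mul_one] at this
    exact hc.trans_le (this.trans_eq (div_one _).symm)
  have hmul_φ (t : ℝ) : t * φ t = aucStarModulus X t :=
    mul_div_cancel_of_imp' fun ht => by rw [ht, aucStarModulus_zero]
  have hδ₀ : δ 0 = 0 := intervalIntegral.integral_same
  have hlip : LipschitzOnWith 1 δ (Ici 0) :=
    hφ.lipschitzOnWith_integral hφ₀ fun t ht => aucStarModulus_div_le_one ht
  refine ⟨⟨hlip.continuousOn, hφ.monotoneOn_integral hφ₀, hφ.convexOn_integral, hδ₀,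
    hφ.tendsto_integral_atTop zero_le_one hφ₁⟩, hlip, fun t ht => ⟨?_, ?_⟩⟩
  · have hhalf : 0 ≤ t / 2 := by positivity
    have hstep : δ (t / 2) + (t - t / 2) * φ (t / 2) ≤ δ t :=
      hφ.integral_add_mul_le hhalf (half_le_self ht)
    have hδ_half : δ 0 ≤ δ (t / 2) := hφ.monotoneOn_integral hφ₀ self_mem_Ici hhalf hhalf
    rw [sub_half, hmul_φ] at hstep
    linarith
  · have hstep : δ t ≤ δ 0 + (t - 0) * φ t := hφ.integral_le_add_mul le_rfl ht
    rwa [sub_zero, hmul_φ, hδ₀, zero_add] at hstep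

/-- If `δ̄*_X(t) ≥ c·t^q` on `[0,1]` (for some `c > 0`, `q ≥ 1`), then
`δ(t) = ∫_0^t δ̄*_X(s)/s ds` is a `1`-Lipschitz Orlicz function with
`δ̄*_X(t/2) ≤ δ(t) ≤ δ̄*_X(t)` for all `t ≥ 0`. -/
theorem delta_orlicz (X : Type*) [NormedAddCommGroup X] [NormedSpace ℝ X] [CompleteSpace X]
    (c q : ℝ) (hc : 0 < c) (hq : 1 ≤ q)
    (hlow : ∀ t ∈ Set.Icc (0 : ℝ) 1, c * t ^ q ≤ aucStarModulus X t) :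
    let δ : ℝ → ℝ := fun t => ∫ s in (0 : ℝ)..t, aucStarModulus X s / s
    (ContinuousOn δ (Set.Ici 0) ∧ MonotoneOn δ (Set.Ici 0) ∧
      ConvexOn ℝ (Set.Ici 0) δ ∧ δ 0 = 0 ∧ Tendsto δ atTop atTop) ∧
    LipschitzOnWith 1 δ (Set.Ici 0) ∧
    ∀ t : ℝ, 0 ≤ t → aucStarModulus X (t / 2) ≤ δ t ∧ δ t ≤ aucStarModulus X t :=
  delta_orlicz_general X c q hc hlow
end

section
/- Suppose (x_n) is a sequence in the unit sphere of a Banach space X such that for all k ≤ n_1 < ... < n_k and all signs ε_i ∈ {-1,0,1}, A·‖Σ ε_i s_i‖_{c_0} ≤ ‖Σ_{i=1}^k ε_i x_{n_i}‖_X ≤ B·‖Σ ε_i s_i‖_{c_0}, where (s_i) is the summing basis of c_0 and A, B > 0. Then the maps g_k: [ℕ]^k → X defined by g_k(n) = Σ_{i=1}^k x_{2k+n_i} satisfy (A/2)·d_K(n,m) ≤ ‖g_k(n) - g_k(m)‖ ≤ B·d_K(n,m) for all n, m ∈ [ℕ]^k; i.e., the interlaced graphs equi-Lipschitz embed into X.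 -/
open Filter Finset

/-- The `c₀` (sup) norm of `Σ_{i=1}^k ε_i s_i`, where `(s_i)` is the summing basis of `c₀`:
the `j`-th coordinate is `Σ_{i ≥ j} ε_i`. -/
noncomputable def c0SummingNorm {k : ℕ} (ε : Fin k → ℝ) : ℝ :=
  ⨆ j : Fin k, |∑ i ∈ Finset.univ.filter (fun i => j ≤ i), ε i|

/-!
Enumerate `n ∪ m` increasingly as `e` and put `ε_i = 1_n(e i) - 1_m(e i)`, so that
`Σ ε_i x_{2k + e i} = g_k(n) - g_k(m)`, an admissible sum because `|n ∪ m| ≤ 2k`.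
The tail sums of `ε` are the tail discrepancies `T(a) = |n ∩ [a, ∞)| - |m ∩ [a, ∞)|`, hence
`‖Σ ε_i s_i‖ = sup_a |T(a)|`; a segment discrepancy is `T(a) - T(b + 1)`, and a final segment
gives `T(a)` itself, so `‖Σ ε_i s_i‖ ≤ d_K(n, m) ≤ 2 ‖Σ ε_i s_i‖`.
-/

lemma Finset.sum_orderEmbOfFin {α M : Type*} [LinearOrder α] [AddCommMonoid M] (s : Finset α)
    {k : ℕ} (h : s.card = k) (f : α → M) : ∑ i, f (s.orderEmbOfFin h i) = ∑ x ∈ s, f x := by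
  rw [← sum_coe_sort s f]
  exact (s.orderIsoOfFin h).toEquiv.sum_comp fun x : s => f x

section SummingNorm

variable {k : ℕ} (ε : Fin k → ℝ)

lemma c0SummingNorm_nonneg : 0 ≤ c0SummingNorm ε :=
  Real.iSup_nonneg fun _ => abs_nonneg _

lemma abs_sum_tail_le_c0SummingNorm (j : Fin k) :
    |∑ i ∈ univ.filter (fun i => j ≤ i), ε i| ≤ c0SummingNorm ε :=
  le_ciSup (f := fun j : Fin k => |∑ i ∈ univ.filter (fun i => j ≤ i), ε i|)
    (Set.finite_range _).bddAbove j

/-- Every upward closed set of indices is empty or a tail `{i | j ≤ i}`. -/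
lemma abs_sum_filter_le_c0SummingNorm (P : Fin k → Prop) [DecidablePred P] (hP : Monotone P) :
    |∑ i ∈ univ.filter P, ε i| ≤ c0SummingNorm ε := by
  by_cases hne : (univ.filter P).Nonempty
  · set j := (univ.filter P).min' hne
    have htail : univ.filter P = univ.filter (fun i => j ≤ i) := by
      ext i
      simp only [mem_filter, mem_univ, true_and]
      exact ⟨fun hi => min'_le _ _ (by simpa using hi),
        fun hji => hP hji (by simpa using min'_mem _ hne)⟩
    rw [htail]
    exact abs_sum_tail_le_c0SummingNorm ε j
  · rw [not_nonempty_iff_eq_empty.1 hne, sum_empty, abs_zero]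
    exact c0SummingNorm_nonneg ε

end SummingNorm

section Interlacing

variable (n m : Finset ℕ)

def segDiff (a b : ℕ) : ℕ := (((n ∩ Icc a b).card : ℤ) - ((m ∩ Icc a b).card : ℤ)).natAbs

lemma dseg_eq_iSup_segDiff : dseg n m = ⨆ a, ⨆ b, segDiff n m a b := rfl

lemma segDiff_le_card_add_card (a b : ℕ) : segDiff n m a b ≤ n.card + m.card :=
  (Int.natAbs_sub_le _ _).trans <| by
    simpa only [Int.natAbs_natCast] using
      Nat.add_le_add (card_le_card inter_subset_left) (card_le_card inter_subset_left)

lemma segDiff_le_dseg (a b : ℕ) : segDiff n m a b ≤ dseg n m := by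
  rw [dseg_eq_iSup_segDiff]
  refine le_trans (le_ciSup ⟨n.card + m.card, ?_⟩ b)
    (le_ciSup (f := fun a => ⨆ b, segDiff n m a b) ⟨n.card + m.card, ?_⟩ a)
  · rintro _ ⟨b, rfl⟩
    exact segDiff_le_card_add_card n m a b
  · rintro _ ⟨a, rfl⟩
    exact ciSup_le (segDiff_le_card_add_card n m a)

lemma dseg_le {C : ℝ} (hC : 0 ≤ C) (h : ∀ a b, (segDiff n m a b : ℝ) ≤ C) :
    (dseg n m : ℝ) ≤ C := by
  have : dseg n m ≤ ⌊C⌋₊ := by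
    rw [dseg_eq_iSup_segDiff]
    exact ciSup_le fun a => ciSup_le fun b => Nat.le_floor (h a b)
  exact (Nat.cast_le.mpr this).trans (Nat.floor_le hC)

def tailDiff (a : ℕ) : ℤ :=
  ((n.filter (fun c => a ≤ c)).card : ℤ) - ((m.filter (fun c => a ≤ c)).card : ℤ)

lemma card_filter_le_eq_card_inter_Icc_add (s : Finset ℕ) {a b : ℕ} (h : a ≤ b + 1) :
    (s.filter (fun c => a ≤ c)).card =
      (s ∩ Icc a b).card + (s.filter (fun c => b + 1 ≤ c)).card := by
  rw [← card_union_of_disjoint]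
  · congr 1
    ext c
    simp only [mem_filter, mem_union, mem_inter, mem_Icc]
    grind
  · rw [disjoint_left]
    intro c hc hc'
    simp only [mem_filter, mem_inter, mem_Icc] at hc hc'
    omega

lemma card_inter_Icc_sub_eq_tailDiff_sub {a b : ℕ} (h : a ≤ b + 1) :
    ((n ∩ Icc a b).card : ℤ) - ((m ∩ Icc a b).card : ℤ) =
      tailDiff n m a - tailDiff n m (b + 1) := by
  rw [tailDiff, tailDiff, card_filter_le_eq_card_inter_Icc_add n h,
    card_filter_le_eq_card_inter_Icc_add m h]
  push_cast
  ring

lemma natAbs_tailDiff_le_dseg (a : ℕ) : (tailDiff n m a).natAbs ≤ dseg n m := by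
  set b := a + (n ∪ m).sup id
  have hfar : tailDiff n m (b + 1) = 0 := by
    have hempty : ∀ s ⊆ n ∪ m, s.filter (fun c => b + 1 ≤ c) = ∅ := fun s hs =>
      filter_false_of_mem fun c hc => by
        have := le_sup (f := id) (hs hc)
        simp only [id] at this
        omega
    rw [tailDiff, hempty n subset_union_left, hempty m subset_union_right, sub_self]
  have := segDiff_le_dseg n m a b
  rwa [segDiff, card_inter_Icc_sub_eq_tailDiff_sub n m (by omega), hfar, sub_zero] at this

lemma dseg_le_two_mul {C : ℝ} (h : ∀ a, |(tailDiff n m a : ℝ)| ≤ C) :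
    (dseg n m : ℝ) ≤ 2 * C := by
  have hC : 0 ≤ C := (abs_nonneg _).trans (h 0)
  refine dseg_le n m (by positivity) fun a b => ?_
  rw [segDiff, Nat.cast_natAbs, Int.cast_abs]
  by_cases hab : a ≤ b + 1
  · rw [card_inter_Icc_sub_eq_tailDiff_sub n m hab]
    push_cast
    linarith [abs_sub (tailDiff n m a : ℝ) (tailDiff n m (b + 1)), h a, h (b + 1)]
  · rw [Icc_eq_empty (by omega)]
    simp only [inter_empty, card_empty, sub_self, Int.cast_zero, abs_zero]
    positivity

noncomputable def interlaceSigns (i : Fin (n ∪ m).card) : ℝ :=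
  (if (n ∪ m).orderEmbOfFin rfl i ∈ n then 1 else 0) -
    (if (n ∪ m).orderEmbOfFin rfl i ∈ m then 1 else 0)

lemma interlaceSigns_eq (i : Fin (n ∪ m).card) :
    interlaceSigns n m i = -1 ∨ interlaceSigns n m i = 0 ∨ interlaceSigns n m i = 1 := by
  unfold interlaceSigns
  split_ifs <;> norm_num

lemma sum_interlaceSigns_smul {M : Type*} [AddCommGroup M] [Module ℝ M] (f : ℕ → M) :
    ∑ i, interlaceSigns n m i • f ((n ∪ m).orderEmbOfFin rfl i) =
      ∑ c ∈ n, f c - ∑ c ∈ m, f c := by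
  unfold interlaceSigns
  rw [(n ∪ m).sum_orderEmbOfFin rfl fun c =>
    ((if c ∈ n then 1 else 0) - (if c ∈ m then 1 else 0) : ℝ) • f c]
  simp only [sub_smul, ite_smul, one_smul, zero_smul, sum_sub_distrib, sum_ite_mem,
    union_inter_cancel_left, union_inter_cancel_right]

lemma sum_filter_interlaceSigns (P : ℕ → Prop) [DecidablePred P] :
    ∑ i ∈ univ.filter (fun i => P ((n ∪ m).orderEmbOfFin rfl i)), interlaceSigns n m i =
      ((n.filter P).card : ℝ) - ((m.filter P).card : ℝ) := by
  have := sum_interlaceSigns_smul n m fun c => if P c then (1 : ℝ) else 0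
  simp only [smul_eq_mul, mul_ite, mul_one, mul_zero, sum_boole] at this
  rw [sum_filter, this]

lemma tailDiff_eq_sum_interlaceSigns (a : ℕ) :
    (tailDiff n m a : ℝ) =
      ∑ i ∈ univ.filter (fun i => a ≤ (n ∪ m).orderEmbOfFin rfl i), interlaceSigns n m i := by
  rw [sum_filter_interlaceSigns, tailDiff]
  push_cast
  rfl

lemma abs_tailDiff_le_c0SummingNorm (a : ℕ) :
    |(tailDiff n m a : ℝ)| ≤ c0SummingNorm (interlaceSigns n m) := by
  rw [tailDiff_eq_sum_interlaceSigns]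
  exact abs_sum_filter_le_c0SummingNorm _ _
    fun i j hij h => h.trans ((n ∪ m).orderEmbOfFin rfl |>.monotone hij)

lemma c0SummingNorm_interlaceSigns_le_dseg :
    c0SummingNorm (interlaceSigns n m) ≤ dseg n m := by
  refine Real.iSup_le (fun j => ?_) (Nat.cast_nonneg _)
  have htail : univ.filter (fun i => j ≤ i) =
      univ.filter (fun i => (n ∪ m).orderEmbOfFin rfl j ≤ (n ∪ m).orderEmbOfFin rfl i) := by
    simp only [OrderEmbedding.le_iff_le]
  rw [htail, ← tailDiff_eq_sum_interlaceSigns, ← Int.cast_abs, ← Nat.cast_natAbs]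
  exact_mod_cast natAbs_tailDiff_le_dseg n m _

end Interlacing

theorem spreading_summing_equilipschitz_general
    (X : Type*) [NormedAddCommGroup X] [NormedSpace ℝ X]
    (x : ℕ → X) (A B : ℝ) (hA : 0 < A) (hB : 0 < B)
    (hspread : ∀ (k : ℕ) (nn : Fin k → ℕ) (ε : Fin k → ℝ),
      StrictMono nn → (∀ i, k ≤ nn i) → (∀ i, ε i = -1 ∨ ε i = 0 ∨ ε i = 1) →
      A * c0SummingNorm ε ≤ ‖∑ i, ε i • x (nn i)‖ ∧
        ‖∑ i, ε i • x (nn i)‖ ≤ B * c0SummingNorm ε) :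
    ∀ (k : ℕ) (n m : Finset ℕ), n.card = k → m.card = k →
      (A / 2) * (dseg n m : ℝ) ≤ ‖(∑ j ∈ n, x (2 * k + j)) - ∑ j ∈ m, x (2 * k + j)‖ ∧
      ‖(∑ j ∈ n, x (2 * k + j)) - ∑ j ∈ m, x (2 * k + j)‖ ≤ B * (dseg n m : ℝ) := by
  intro k n m hn hm
  have hcard : (n ∪ m).card ≤ 2 * k := by
    have := card_union_le n m
    omega
  obtain ⟨hlower, hupper⟩ := hspread _ (fun i => 2 * k + (n ∪ m).orderEmbOfFin rfl i)
    (interlaceSigns n m)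
    (fun i j hij => Nat.add_lt_add_left ((orderEmbOfFin _ _).strictMono hij) _)
    (fun i => hcard.trans (Nat.le_add_right _ _)) (interlaceSigns_eq n m)
  rw [sum_interlaceSigns_smul n m fun c => x (2 * k + c)] at hlower hupper
  have hnorm_le_dseg := c0SummingNorm_interlaceSigns_le_dseg n m
  have hdseg_le_two_mul_norm := dseg_le_two_mul n m (abs_tailDiff_le_c0SummingNorm n m)
  constructor
  · calc A / 2 * (dseg n m : ℝ) ≤ A / 2 * (2 * c0SummingNorm (interlaceSigns n m)) := by gcongr
      _ = A * c0SummingNorm (interlaceSigns n m) := by ring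
      _ ≤ _ := hlower
  · exact hupper.trans (by gcongr)

/-- If `(x_n)` is a sequence in the unit sphere of a Banach space `X` generating a spreading
model equivalent (with constants `A, B`) to the summing basis of `c₀`, then the maps
`g_k(n) = Σ_{i=1}^k x_{2k+n_i}` satisfy
`(A/2)·d_K(n,m) ≤ ‖g_k(n) - g_k(m)‖ ≤ B·d_K(n,m)`;  i.e., the interlaced graphs
equi-Lipschitz embed into `X`. -/
theorem spreading_summing_equilipschitz
    (X : Type*) [NormedAddCommGroup X] [NormedSpace ℝ X] [CompleteSpace X]
    (x : ℕ → X) (hsph : ∀ n, ‖x n‖ = 1) (A B : ℝ) (hA : 0 < A) (hB : 0 < B)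
    (hspread : ∀ (k : ℕ) (nn : Fin k → ℕ) (ε : Fin k → ℝ),
      StrictMono nn → (∀ i, k ≤ nn i) → (∀ i, ε i = -1 ∨ ε i = 0 ∨ ε i = 1) →
      A * c0SummingNorm ε ≤ ‖∑ i, ε i • x (nn i)‖ ∧
        ‖∑ i, ε i • x (nn i)‖ ≤ B * c0SummingNorm ε) :
    ∀ (k : ℕ) (n m : Finset ℕ), n.card = k → m.card = k →
      (A / 2) * (dseg n m : ℝ) ≤ ‖(∑ j ∈ n, x (2 * k + j)) - ∑ j ∈ m, x (2 * k + j)‖ ∧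
      ‖(∑ j ∈ n, x (2 * k + j)) - ∑ j ∈ m, x (2 * k + j)‖ ≤ B * (dseg n m : ℝ) :=
  spreading_summing_equilipschitz_general X x A B hA hB hspread
end
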